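/- arXiv:2101.05527 — 4 statements merged into one kernel-verified Lean document; each statement's English description precedes it below -/
import Mathlib

section
/- For every c > 0 there exists a constant C > 0 such that for all λ ≥ 1 and all x ∈ ℝ² with |x| ≥ c one has |π(λx) − p* − (2x₁/(λ|x|²), 2x₂/(λ|x|²), 0)| ≤ C λ⁻², and moreover the total derivative in x of the remainder satisfies ‖D_x[π(λx)] − D_x[(2x₁/(λ|x|²), 2x₂/(λ|x|²), 0)]‖ ≤ C λ⁻². -/
open MeasureTheory Real

noncomputable section

abbrev E2 := EuclideanSpace ℝ (Fin 2)
abbrev E3 := EuclideanSpace ℝ (Fin 3)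

/-- The inverse stereographic projection `π : ℝ² → ℝ³` from the north pole. -/
def stereo (x : E2) : E3 :=
  (WithLp.equiv 2 (Fin 3 → ℝ)).symm
    ![2 * x 0 / (1 + ‖x‖ ^ 2), 2 * x 1 / (1 + ‖x‖ ^ 2), (‖x‖ ^ 2 - 1) / (1 + ‖x‖ ^ 2)]

/-- The north pole `p* = (0,0,1)`. -/
def pStar : E3 := (WithLp.equiv 2 (Fin 3 → ℝ)).symm ![0, 0, 1]

/-- The leading order correction `(2x₁/(λ|x|²), 2x₂/(λ|x|²), 0)`. -/
def tail (l : ℝ) (x : E2) : E3 :=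
  (WithLp.equiv 2 (Fin 3 → ℝ)).symm
    ![2 * x 0 / (l * ‖x‖ ^ 2), 2 * x 1 / (l * ‖x‖ ^ 2), 0]

/-!
Since `tail λ x = tail 1 (λx)`, the remainder is `R (λx)` for the fixed map
`R = π - p* - tail 1`, and the chain rule gives `D_x[R (λx)] = λ · DR (λx)`. In vector form
`R y = (2/(1+|y|²) - 2/|y|²) • (y, 0) - 2/(1+|y|²) • p*`, and these radial coefficients give
`|R y| ≤ 3/|y|²` and `‖DR y‖ ≤ 9/|y|³` for every `y ≠ 0`. With `|λx| ≥ λc` the two bounds become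
`3/(c²λ²)` and `λ · 9/(λc)³ = 9/(c³λ²)`.
-/

theorem HasDerivAt.hasFDerivAt_comp_norm_sq {E : Type*} [NormedAddCommGroup E]
    [InnerProductSpace ℝ E] {φ : ℝ → ℝ} {φ' : ℝ} {y : E} (hφ : HasDerivAt φ φ' (‖y‖ ^ 2)) :
    HasFDerivAt (fun z => φ (‖z‖ ^ 2)) ((2 * φ') • innerSL ℝ y) y := by
  refine (hφ.comp_hasFDerivAt y (hasStrictFDerivAt_norm_sq y).hasFDerivAt).congr_fderiv ?_
  module

theorem norm_fderiv_comp_smul_sub_fderiv_comp_smul {𝕜 F G : Type*} [NontriviallyNormedField 𝕜]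
    [NormedAddCommGroup F] [NormedSpace 𝕜 F] [NormedAddCommGroup G] [NormedSpace 𝕜 G]
    (f g : F → G) (l : 𝕜) (x : F) :
    ‖fderiv 𝕜 (fun y => f (l • y)) x - fderiv 𝕜 (fun y => g (l • y)) x‖ =
      ‖l‖ * ‖fderiv 𝕜 f (l • x) - fderiv 𝕜 g (l • x)‖ := by
  rw [fderiv_comp_smul, fderiv_comp_smul, ← smul_sub, norm_smul]

theorem hasDerivAt_div_one_add (a : ℝ) {s : ℝ} (hs : 1 + s ≠ 0) :
    HasDerivAt (fun t => a / (1 + t)) (-a / (1 + s) ^ 2) s := by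
  simpa using (hasDerivAt_const s a).fun_div ((hasDerivAt_id s).const_add 1) hs

theorem hasDerivAt_div_id (a : ℝ) {s : ℝ} (hs : s ≠ 0) :
    HasDerivAt (fun t => a / t) (-a / s ^ 2) s := by
  simpa using (hasDerivAt_const s a).fun_div (hasDerivAt_id s) hs

def planeIncl : E2 →ₗᵢ[ℝ] E3 where
  toFun y := (WithLp.equiv 2 (Fin 3 → ℝ)).symm ![y 0, y 1, 0]
  map_add' y z := by ext i; fin_cases i <;> simp
  map_smul' a y := by ext i; fin_cases i <;> simp
  norm_map' y := by simp [EuclideanSpace.norm_eq, Fin.sum_univ_succ]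

theorem norm_pStar : ‖pStar‖ = 1 := by
  simp [pStar, EuclideanSpace.norm_eq, Fin.sum_univ_succ]

theorem stereo_eq (y : E2) :
    stereo y = pStar + (2 / (1 + ‖y‖ ^ 2)) • (planeIncl y - pStar) := by
  have : 1 + ‖y‖ ^ 2 ≠ 0 := by positivity
  ext i; fin_cases i <;> simp [stereo, pStar, planeIncl] <;> field_simp
  ring

theorem tail_eq (l : ℝ) (y : E2) : tail l y = (2 / (l * ‖y‖ ^ 2)) • planeIncl y := by
  ext i; fin_cases i <;> simp [tail, planeIncl] <;> ring

theorem tail_eq_tail_one_smul (l : ℝ) (x : E2) : tail l x = tail 1 (l • x) := by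
  rcases eq_or_ne l 0 with rfl | hl
  · simp [tail_eq]
  rw [tail_eq, tail_eq, map_smul, smul_smul, norm_smul, Real.norm_eq_abs, mul_pow, sq_abs]
  rcases eq_or_ne x 0 with rfl | hx
  · simp
  congr 1
  field_simp

theorem stereo_sub_pStar_sub_tail_one (y : E2) :
    stereo y - pStar - tail 1 y =
      (2 / (1 + ‖y‖ ^ 2) - 2 / ‖y‖ ^ 2) • planeIncl y - (2 / (1 + ‖y‖ ^ 2)) • pStar := by
  rw [stereo_eq, tail_eq, one_mul]
  module

theorem hasFDerivAt_stereo_sub_pStar_sub_tail_one {y : E2} (hy : y ≠ 0) :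
    HasFDerivAt (fun z => stereo z - pStar - tail 1 z)
      ((2 / (1 + ‖y‖ ^ 2) - 2 / ‖y‖ ^ 2) • planeIncl.toContinuousLinearMap +
        ((2 * (-2 / (1 + ‖y‖ ^ 2) ^ 2 - -2 / (‖y‖ ^ 2) ^ 2)) • innerSL ℝ y).smulRight
          (planeIncl y) -
        ((2 * (-2 / (1 + ‖y‖ ^ 2) ^ 2)) • innerSL ℝ y).smulRight pStar) y := by
  have hs : ‖y‖ ^ 2 ≠ 0 := by positivity
  have hs1 : 1 + ‖y‖ ^ 2 ≠ 0 := by positivity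
  have hφ := ((hasDerivAt_div_one_add 2 hs1).sub (hasDerivAt_div_id 2 hs)).hasFDerivAt_comp_norm_sq
  have hψ := (hasDerivAt_div_one_add 2 hs1).hasFDerivAt_comp_norm_sq
  simp_rw [stereo_sub_pStar_sub_tail_one]
  exact (hφ.smul planeIncl.toContinuousLinearMap.hasFDerivAt).sub (hψ.smul_const pStar)

theorem two_div_one_add_sub_two_div {s : ℝ} (hs : 0 < s) :
    2 / (1 + s) - 2 / s = -(2 / (s * (1 + s))) := by
  field_simp
  ring

theorem stereo_remainder_coeff_le {r : ℝ} (hr : 0 < r) :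
    |2 / (1 + r ^ 2) - 2 / r ^ 2| * r + |2 / (1 + r ^ 2)| ≤ 3 / r ^ 2 := by
  rw [two_div_one_add_sub_two_div (by positivity), abs_neg, abs_of_pos (by positivity),
    abs_of_pos (by positivity), div_mul_eq_mul_div,
    div_add_div _ _ (by positivity) (by positivity),
    div_le_div_iff₀ (by positivity) (by positivity)]
  nlinarith [sq_nonneg (r - 1), pow_pos hr 3, pow_pos hr 4, pow_pos hr 5, pow_pos hr 6]

theorem stereo_remainder_deriv_coeff_le {r : ℝ} (hr : 0 < r) :
    |2 / (1 + r ^ 2) - 2 / r ^ 2| + |2 * (-2 / (1 + r ^ 2) ^ 2 - -2 / (r ^ 2) ^ 2)| * r ^ 2 +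
      |2 * (-2 / (1 + r ^ 2) ^ 2)| * r ≤ 9 / r ^ 3 := by
  have e2 : 2 * (-2 / (1 + r ^ 2) ^ 2 - -2 / (r ^ 2) ^ 2) =
      4 * (1 + 2 * r ^ 2) / (r ^ 2 * (1 + r ^ 2)) ^ 2 := by field_simp; ring
  have e3 : 2 * (-2 / (1 + r ^ 2) ^ 2) = -(4 / (1 + r ^ 2) ^ 2) := by ring
  have b1 : 2 / (r ^ 2 * (1 + r ^ 2)) ≤ 1 / r ^ 3 := by
    rw [div_le_div_iff₀ (by positivity) (by positivity)]
    nlinarith [sq_nonneg (r - 1), pow_pos hr 2]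
  have b2 : 4 * (1 + 2 * r ^ 2) / (r ^ 2 * (1 + r ^ 2)) ^ 2 * r ^ 2 ≤ 4 / r ^ 3 := by
    rw [div_mul_eq_mul_div, div_le_div_iff₀ (by positivity) (by positivity)]
    nlinarith [mul_nonneg (sq_nonneg r) (sq_nonneg (r - 1)), sq_nonneg (r - 1 / 2), pow_pos hr 2,
      pow_pos hr 4]
  have b3 : 4 / (1 + r ^ 2) ^ 2 * r ≤ 4 / r ^ 3 := by
    rw [div_mul_eq_mul_div, div_le_div_iff₀ (by positivity) (by positivity)]
    nlinarith [pow_pos hr 2]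
  rw [two_div_one_add_sub_two_div (by positivity), e2, e3, abs_neg, abs_neg, abs_of_pos (by positivity), abs_of_pos (by positivity),
    abs_of_pos (by positivity)]
  linarith [show 1 / r ^ 3 + 4 / r ^ 3 + 4 / r ^ 3 = 9 / r ^ 3 by ring]

theorem norm_stereo_sub_pStar_sub_tail_one_le {y : E2} (hy : y ≠ 0) :
    ‖stereo y - pStar - tail 1 y‖ ≤ 3 / ‖y‖ ^ 2 := by
  rw [stereo_sub_pStar_sub_tail_one]
  refine (norm_sub_le _ _).trans (le_of_eq_of_le ?_ (stereo_remainder_coeff_le (norm_pos_iff.2 hy)))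
  rw [norm_smul, norm_smul, planeIncl.norm_map, norm_pStar, Real.norm_eq_abs, Real.norm_eq_abs,
    mul_one]

theorem norm_fderiv_stereo_sub_fderiv_tail_one_le {y : E2} (hy : y ≠ 0) :
    ‖fderiv ℝ stereo y - fderiv ℝ (tail 1) y‖ ≤ 9 / ‖y‖ ^ 3 := by
  have hs : ‖y‖ ^ 2 ≠ 0 := by positivity
  have hT : DifferentiableAt ℝ (tail 1) y := by
    rw [funext (tail_eq 1)]
    simp_rw [one_mul]
    exact ((hasDerivAt_div_id 2 hs).hasFDerivAt_comp_norm_sq.smul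
      planeIncl.toContinuousLinearMap.hasFDerivAt).differentiableAt
  have hR := hasFDerivAt_stereo_sub_pStar_sub_tail_one hy
  -- `stereo = (stereo - p* - tail 1) + tail 1 + p*` yields its derivative without computing it
  have hS := (hR.fun_add hT.hasFDerivAt).add_const pStar
  simp only [sub_add_cancel] at hS
  rw [hS.fderiv, add_sub_cancel_right]
  refine (norm_sub_le_of_le (norm_add_le _ _) le_rfl).trans
    (le_trans ?_ (stereo_remainder_deriv_coeff_le (norm_pos_iff.2 hy)))
  simp only [norm_smul, ContinuousLinearMap.norm_smulRight_apply, innerSL_apply_norm,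
    planeIncl.norm_map, norm_pStar, Real.norm_eq_abs]
  grw [planeIncl.norm_toContinuousLinearMap_le]
  exact le_of_eq (by ring)

/-- For every `c > 0` there is `C > 0` so that for all `λ ≥ 1` and `|x| ≥ c` one has
`|π(λx) − p* − (2x/(λ|x|²),0)| ≤ Cλ⁻²`, and the same bound for the total derivative in `x`
of the remainder. -/
theorem stmt0 :
    ∀ c : ℝ, 0 < c → ∃ C : ℝ, 0 < C ∧ ∀ l : ℝ, 1 ≤ l → ∀ x : E2, c ≤ ‖x‖ →
      ‖stereo (l • x) - pStar - tail l x‖ ≤ C / l ^ 2 ∧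
      ‖fderiv ℝ (fun y => stereo (l • y)) x - fderiv ℝ (tail l) x‖ ≤ C / l ^ 2 := by
  intro c hc
  refine ⟨3 / c ^ 2 + 9 / c ^ 3, by positivity, fun l hl x hx => ?_⟩
  have hl0 : 0 < l := by linarith
  have hlx : l * c ≤ ‖l • x‖ := by
    rw [norm_smul, Real.norm_eq_abs, abs_of_pos hl0]; gcongr
  have hy : l • x ≠ 0 := norm_pos_iff.1 ((mul_pos hl0 hc).trans_le hlx)
  have htail : tail l = fun y => tail 1 (l • y) := funext (tail_eq_tail_one_smul l)
  constructor
  · rw [tail_eq_tail_one_smul]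
    calc _ ≤ 3 / ‖l • x‖ ^ 2 := norm_stereo_sub_pStar_sub_tail_one_le hy
      _ ≤ 3 / (l * c) ^ 2 := by gcongr
      _ ≤ (3 / c ^ 2 + 9 / c ^ 3) / l ^ 2 := by
        rw [mul_pow, div_mul_eq_div_div_swap]; gcongr; linarith [show 0 < 9 / c ^ 3 by positivity]
  · rw [htail, norm_fderiv_comp_smul_sub_fderiv_comp_smul, Real.norm_eq_abs, abs_of_pos hl0]
    calc _ ≤ l * (9 / ‖l • x‖ ^ 3) := by gcongr; exact norm_fderiv_stereo_sub_fderiv_tail_one_le hy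
      _ ≤ l * (9 / (l * c) ^ 3) := by gcongr
      _ = 9 / c ^ 3 / l ^ 2 := by field_simp
      _ ≤ (3 / c ^ 2 + 9 / c ^ 3) / l ^ 2 := by
        gcongr; linarith [show 0 < 3 / c ^ 2 by positivity]
end
end

section
/- For every r > 0 there exists a constant C > 0 such that for all λ ≥ max(1, 2/r): |∫_{𝔻_r} Σ_{i=1,2} x_i · ∂_λ( 16λ³ x_i /(1+λ²|x|²)³ ) dx + 8π λ⁻²| ≤ C λ⁻³; that is, the truncated integral of x against the λ-derivative of −Δπ̄_λ equals 8π λ⁻² up to an error of order λ⁻³. -/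
/-!
Summing `xᵢ` against the `λ`-derivative collapses the integrand to the radial profile
`48λ²ρ²(1 - λ²ρ²)/(1 + λ²ρ²)⁴` of `ρ = |x|`. In polar coordinates `ρ` times this profile has the
explicit primitive `H_λ(ρ) = 4(1 + 3λ²ρ² + 6λ⁴ρ⁴)/(λ²(1 + λ²ρ²)³)`, and `H_λ(0) = 4/λ²`, so the
integral over `𝔻_r` is `2πH_λ(r) - 8π/λ²`. Finally `0 ≤ H_λ(r) ≤ 24/(λ⁴r²)`, since
`1 + 3u + 6u² ≤ 6(1 + u)²`.
-/

open MeasureTheory Real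

noncomputable section

open Metric Set in
theorem setIntegral_ball_fun_norm {E F : Type*} [NormedAddCommGroup E] [NormedSpace ℝ E]
    [Nontrivial E] [MeasurableSpace E] [BorelSpace E] [FiniteDimensional ℝ E] (μ : Measure E)
    [μ.IsAddHaarMeasure] [NormedAddCommGroup F] [NormedSpace ℝ F] (f : ℝ → F) {r : ℝ}
    (hr : 0 ≤ r) :
    ∫ x in ball 0 r, f ‖x‖ ∂μ = Module.finrank ℝ E • μ.real (ball 0 1) •
      ∫ y in (0 : ℝ)..r, y ^ (Module.finrank ℝ E - 1) • f y := by
  have hball : ball (0 : E) r = (fun x => ‖x‖) ⁻¹' Iio r := by ext; simp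
  have hind : (fun y : ℝ => y ^ (Module.finrank ℝ E - 1) • (Iio r).indicator f y)
      = (Iio r).indicator fun y => y ^ (Module.finrank ℝ E - 1) • f y := by
    ext y; by_cases hy : y ∈ Iio r <;> simp [hy]
  rw [hball, ← integral_indicator (measurableSet_Iio.preimage continuous_norm.measurable), show ((fun x : E => ‖x‖) ⁻¹' Iio r).indicator (fun x => f ‖x‖)
      = fun x => (Iio r).indicator f ‖x‖ from funext fun _ => indicator_comp_right _,
    integral_fun_norm_addHaar μ ((Iio r).indicator f), hind,
    integral_indicator measurableSet_Iio, Measure.restrict_restrict measurableSet_Iio,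
    Iio_inter_Ioi, ← integral_Ioc_eq_integral_Ioo, intervalIntegral.integral_of_le hr]

theorem setIntegral_ball_fun_norm_plane {F : Type*} [NormedAddCommGroup F] [NormedSpace ℝ F]
    (f : ℝ → F) {r : ℝ} (hr : 0 ≤ r) :
    ∫ x in Metric.ball (0 : E2) r, f ‖x‖ = (2 * π) • ∫ y in (0 : ℝ)..r, y • f y := by
  rw [setIntegral_ball_fun_norm volume f hr, finrank_euclideanSpace_fin, measureReal_def,
    EuclideanSpace.volume_ball_fin_two]
  simp only [ENNReal.toReal_mul, ENNReal.toReal_pow, ENNReal.toReal_ofReal pi_nonneg,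
    ENNReal.toReal_ofReal zero_le_one, one_pow, one_mul, Nat.add_one_sub_one, pow_one]
  module

theorem hasDerivAt_bubble_coord (c s l : ℝ) (hs : 0 ≤ s) :
    HasDerivAt (fun t : ℝ => 16 * t ^ 3 * c / (1 + t ^ 2 * s) ^ 3)
      (c * (48 * l ^ 2 * (1 - l ^ 2 * s) / (1 + l ^ 2 * s) ^ 4)) l := by
  have hnum : HasDerivAt (fun t : ℝ => 16 * t ^ 3 * c) (48 * l ^ 2 * c) l :=
    (((hasDerivAt_pow 3 l).const_mul 16).mul_const c).congr_deriv (by ring)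
  have hbase : HasDerivAt (fun t : ℝ => 1 + t ^ 2 * s) (2 * l * s) l :=
    (((hasDerivAt_pow 2 l).mul_const s).const_add 1).congr_deriv (by ring)
  refine (hnum.div (hbase.fun_pow 3) (by positivity)).congr_deriv ?_
  field_simp
  ring

def bubbleProfile (l ρ : ℝ) : ℝ := 48 * l ^ 2 * ρ ^ 2 * (1 - l ^ 2 * ρ ^ 2) / (1 + l ^ 2 * ρ ^ 2) ^ 4

def bubblePrimitive (l ρ : ℝ) : ℝ :=
  4 * (1 + 3 * l ^ 2 * ρ ^ 2 + 6 * l ^ 4 * ρ ^ 4) / (l ^ 2 * (1 + l ^ 2 * ρ ^ 2) ^ 3)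

theorem sum_mul_deriv_bubble_coord_eq (l : ℝ) (x : E2) :
    ∑ i : Fin 2, x i * deriv (fun t : ℝ => 16 * t ^ 3 * x i / (1 + t ^ 2 * ‖x‖ ^ 2) ^ 3) l
      = bubbleProfile l ‖x‖ := by
  simp_rw [(hasDerivAt_bubble_coord _ _ l (sq_nonneg ‖x‖)).deriv, ← mul_assoc, ← Finset.sum_mul,
    ← sq, ← EuclideanSpace.real_norm_sq_eq, bubbleProfile]
  ring

theorem hasDerivAt_bubblePrimitive {l : ℝ} (hl : l ≠ 0) (ρ : ℝ) :
    HasDerivAt (bubblePrimitive l) (ρ * bubbleProfile l ρ) ρ := by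
  have hnum : HasDerivAt (fun p : ℝ => 4 * (1 + 3 * l ^ 2 * p ^ 2 + 6 * l ^ 4 * p ^ 4))
      (4 * (6 * l ^ 2 * ρ + 24 * l ^ 4 * ρ ^ 3)) ρ :=
    ((((hasDerivAt_pow 2 ρ).const_mul (3 * l ^ 2)).const_add 1).fun_add
      ((hasDerivAt_pow 4 ρ).const_mul (6 * l ^ 4))).const_mul 4 |>.congr_deriv (by ring)
  have hbase : HasDerivAt (fun p : ℝ => 1 + l ^ 2 * p ^ 2) (2 * l ^ 2 * ρ) ρ :=
    (((hasDerivAt_pow 2 ρ).const_mul (l ^ 2)).const_add 1).congr_deriv (by ring)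
  refine (hnum.div ((hbase.fun_pow 3).const_mul (l ^ 2)) (by positivity)).congr_deriv ?_
  unfold bubbleProfile
  field_simp
  ring

theorem integral_ball_bubbleProfile {l r : ℝ} (hl : l ≠ 0) (hr : 0 ≤ r) :
    ∫ x in Metric.ball (0 : E2) r, bubbleProfile l ‖x‖
      = 2 * π * bubblePrimitive l r - 8 * π / l ^ 2 := by
  have hcont : Continuous fun ρ => ρ * bubbleProfile l ρ := by
    unfold bubbleProfile
    exact continuous_id.mul (by fun_prop (disch := intro; positivity))
  simp_rw [setIntegral_ball_fun_norm_plane _ hr, smul_eq_mul]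
  rw [intervalIntegral.integral_eq_sub_of_hasDerivAt
    (fun ρ _ => hasDerivAt_bubblePrimitive hl ρ) (hcont.intervalIntegrable 0 r)]
  unfold bubblePrimitive
  field_simp
  ring

theorem bubblePrimitive_nonneg (l ρ : ℝ) : 0 ≤ bubblePrimitive l ρ := by
  unfold bubblePrimitive; positivity

theorem bubblePrimitive_le {l ρ : ℝ} (hl : l ≠ 0) (hρ : ρ ≠ 0) :
    bubblePrimitive l ρ ≤ 24 / (l ^ 4 * ρ ^ 2) := by
  have hu : 0 < l ^ 2 * ρ ^ 2 := by positivity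
  unfold bubblePrimitive
  rw [div_le_div_iff₀ (by positivity) (by positivity)]
  nlinarith [sq_nonneg (l ^ 2 * ρ ^ 2), pow_pos hu 3]

/-- For every `r > 0` there is `C > 0` so that for all `λ ≥ max(1, 2/r)`:
`|∫_{𝔻_r} Σᵢ xᵢ ∂_λ(16λ³xᵢ/(1+λ²|x|²)³) dx + 8πλ⁻²| ≤ Cλ⁻³`; i.e. the truncated integral of
`x` against the `λ`-derivative of `−Δπ̄_λ` equals `8πλ⁻²` up to an error of order `λ⁻³`. -/
theorem stmt8 :
    ∀ r : ℝ, 0 < r → ∃ C : ℝ, 0 < C ∧ ∀ l : ℝ, max 1 (2 / r) ≤ l →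
      |(∫ x in Metric.ball (0 : E2) r,
          ∑ i : Fin 2, x i * deriv (fun t : ℝ => 16 * t ^ 3 * x i / (1 + t ^ 2 * ‖x‖ ^ 2) ^ 3) l)
        + 8 * π / l ^ 2| ≤ C / l ^ 3 := by
  intro r hr
  refine ⟨48 * π / r ^ 2, by positivity, fun l hl => ?_⟩
  have hl1 : 1 ≤ l := le_of_max_le_left hl
  have hl0 : 0 < l := by linarith
  rw [setIntegral_congr_fun measurableSet_ball fun x _ => sum_mul_deriv_bubble_coord_eq l x,
    integral_ball_bubbleProfile hl0.ne' hr.le, sub_add_cancel,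
    abs_of_nonneg (mul_nonneg (by positivity) (bubblePrimitive_nonneg l r))]
  calc 2 * π * bubblePrimitive l r ≤ 2 * π * (24 / (l ^ 4 * r ^ 2)) := by
        gcongr; exact bubblePrimitive_le hl0.ne' hr.ne'
    _ = 48 * π / r ^ 2 / l ^ 4 := by ring
    _ ≤ 48 * π / r ^ 2 / l ^ 3 := by gcongr; norm_num
end
end

section
/- Let γ ∈ (1,2), C₀ > 0, T ≥ 0, and let E : [T,∞) → ℝ be differentiable and nonincreasing with 0 < E(t) for all t, E(T) ≤ exp(−γ/(2−γ)), and E′(t) ≤ −C₀⁻¹ E(t)^{2/γ}/|log E(t)| for all t ≥ T. Then there exist constants C > 0 and T₁ ≥ max(T,3) (depending on γ, C₀, T and E(T)) such that E(t) ≤ C t^{−γ/(2−γ)} (log t)^{γ/(2−γ)} for all t ≥ T₁. -/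
/-!
Put `p = 2/γ > 1` and `y = E ^ (1 - p)`. The differential inequality says exactly that
`y' log y ≥ (p - 1)² / C₀`, so the primitive `y log y - y` of `log` grows at least linearly
along the flow; it starts nonnegative because `E(T) ≤ exp(-γ/(2-γ))` means `log y(T) ≥ 1`.
Inverting `y log y ≳ t` gives `y ≳ t / log t`, and `E = y ^ (-γ/(2-γ))`.
-/

open Real Set

noncomputable def logAntideriv (y : ℝ) : ℝ := y * log y - y

lemma logAntideriv_nonneg {y : ℝ} (hy : 0 ≤ y) (hlog : 1 ≤ log y) : 0 ≤ logAntideriv y := by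
  rw [logAntideriv, ← mul_sub_one]
  exact mul_nonneg hy (sub_nonneg.2 hlog)

lemma hasDerivAt_logAntideriv {y : ℝ} (hy : y ≠ 0) : HasDerivAt logAntideriv (log y) y :=
  ((hasDerivAt_mul_log hy).sub (hasDerivAt_id' y)).congr_deriv (add_sub_cancel_right _ _)

lemma hasDerivAt_logAntideriv_rpow {E : ℝ → ℝ} {e p t : ℝ} (hE : HasDerivAt E e t)
    (ht : 0 < E t) :
    HasDerivAt (fun s => logAntideriv (E s ^ (1 - p)))
      ((1 - p) ^ 2 * E t ^ (-p) * log (E t) * e) t := by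
  refine ((hasDerivAt_logAntideriv (rpow_pos_of_pos ht (1 - p)).ne').comp t
    (hE.rpow_const (p := 1 - p) (Or.inl ht.ne'))).congr_deriv ?_
  rw [log_rpow ht, show 1 - p - 1 = -p by ring]
  ring

lemma inv_le_rpow_neg_mul_log_mul {x e p C₀ : ℝ} (hx : 0 < x) (hlog : log x < 0)
    (he : e ≤ -C₀⁻¹ * (x ^ p / |log x|)) : C₀⁻¹ ≤ x ^ (-p) * log x * e := by
  have hneg : x ^ (-p) * log x < 0 := mul_neg_of_pos_of_neg (rpow_pos_of_pos hx _) hlog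
  calc C₀⁻¹ = x ^ (-p) * log x * (-C₀⁻¹ * (x ^ p / |log x|)) := by
        rw [abs_of_neg hlog, rpow_neg hx.le]
        field_simp [(rpow_pos_of_pos hx p).ne', hlog.ne]
    _ ≤ x ^ (-p) * log x * e := mul_le_mul_of_nonpos_left he hneg.le

lemma mul_sub_le_logAntideriv_rpow_sub {E : ℝ → ℝ} {T C₀ p : ℝ}
    (hdiff : ∀ t, T ≤ t → DifferentiableAt ℝ E t) (hpos : ∀ t, T ≤ t → 0 < E t)
    (hlog : ∀ t, T ≤ t → log (E t) < 0)
    (hderiv : ∀ t, T ≤ t → deriv E t ≤ -C₀⁻¹ * (E t ^ p / |log (E t)|)) {t : ℝ} (ht : T ≤ t) :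
    (1 - p) ^ 2 / C₀ * (t - T) ≤
      logAntideriv (E t ^ (1 - p)) - logAntideriv (E T ^ (1 - p)) := by
  have hΦ : ∀ s, T ≤ s → HasDerivAt (fun s => logAntideriv (E s ^ (1 - p)))
      ((1 - p) ^ 2 * E s ^ (-p) * log (E s) * deriv E s) s :=
    fun s hs => hasDerivAt_logAntideriv_rpow (hdiff s hs).hasDerivAt (hpos s hs)
  refine (convex_Ici T).mul_sub_le_image_sub_of_le_deriv
    (fun s hs => (hΦ s hs).continuousAt.continuousWithinAt)
    (fun s hs => (hΦ s (interior_subset hs)).differentiableAt.differentiableWithinAt)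
    (fun s hs => ?_) T self_mem_Ici t ht ht
  have hs : T ≤ s := interior_subset hs
  rw [(hΦ s hs).deriv, div_eq_mul_inv, mul_assoc, mul_assoc, ← mul_assoc (E s ^ (-p))]
  exact mul_le_mul_of_nonneg_left
    (inv_le_rpow_neg_mul_log_mul (hpos s hs) (hlog s hs) (hderiv s hs)) (sq_nonneg _)

lemma mul_sub_le_rpow_mul_log_rpow {E : ℝ → ℝ} {T C₀ p : ℝ}
    (hdiff : ∀ t, T ≤ t → DifferentiableAt ℝ E t) (hpos : ∀ t, T ≤ t → 0 < E t)
    (hlog : ∀ t, T ≤ t → log (E t) < 0)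
    (hderiv : ∀ t, T ≤ t → deriv E t ≤ -C₀⁻¹ * (E t ^ p / |log (E t)|))
    (hET : 1 ≤ (1 - p) * log (E T)) {t : ℝ} (ht : T ≤ t) :
    (1 - p) ^ 2 / C₀ * (t - T) ≤ E t ^ (1 - p) * log (E t ^ (1 - p)) := by
  have hgrowth := mul_sub_le_logAntideriv_rpow_sub hdiff hpos hlog hderiv ht
  have hT : 0 ≤ logAntideriv (E T ^ (1 - p)) :=
    logAntideriv_nonneg (rpow_nonneg (hpos T le_rfl).le _) (by rwa [log_rpow (hpos T le_rfl)])
  have ht : logAntideriv (E t ^ (1 - p)) ≤ E t ^ (1 - p) * log (E t ^ (1 - p)) :=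
    sub_le_self _ (rpow_nonneg (hpos t ht).le _)
  linarith

lemma div_le_of_le_mul_log {y b M : ℝ} (hy : 0 < y) (hM : 0 < M) (hb : b ≤ y * log y)
    (hbM : b / M ≤ exp M) : b / M ≤ y := by
  by_contra! hyb
  have hlog : log y < M := (log_lt_iff_lt_exp hy).2 (hyb.trans_le hbM)
  have : y * log y < b := calc
    y * log y < y * M := mul_lt_mul_of_pos_left hlog hy
    _ < b / M * M := mul_lt_mul_of_pos_right hyb hM
    _ = b := div_mul_cancel₀ b hM.ne'
  linarith

lemma div_log_le_of_le_mul_log {c t y : ℝ} (hy : 0 < y) (ht : exp 1 ≤ t) (hct : c ≤ 4 * t)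
    (h : c * t / 2 ≤ y * log y) : c / 4 * t / log t ≤ y := by
  have ht0 : 0 < t := (exp_pos 1).trans_le ht
  have hL : 1 ≤ log t := (le_log_iff_exp_le ht0).2 ht
  have hM : (0 : ℝ) < 2 * log t := by linarith
  have hexp : exp (2 * log t) = t ^ 2 := by rw [mul_comm, exp_mul, exp_log ht0, rpow_two]
  have hbound : c * t / 2 / (2 * log t) ≤ exp (2 * log t) := by
    rw [hexp, div_le_iff₀ hM]
    nlinarith
  convert div_le_of_le_mul_log hy hM h hbound using 1
  field_simp
  ring

lemma le_mul_rpow_neg_mul_log_rpow {x q α c t : ℝ} (hx : 0 < x) (hqα : q * -α = 1) (hα : 0 ≤ α)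
    (hc : 0 < c) (ht : exp 1 ≤ t) (hct : c ≤ 4 * t) (h : c * t / 2 ≤ x ^ q * log (x ^ q)) :
    x ≤ (c / 4) ^ (-α) * t ^ (-α) * log t ^ α := by
  have ht0 : 0 < t := (exp_pos 1).trans_le ht
  have hL : 0 < log t := log_pos ((one_lt_exp_iff.2 one_pos).trans_le ht)
  calc x = (x ^ q) ^ (-α) := by rw [← rpow_mul hx.le, hqα, rpow_one]
    _ ≤ (c / 4 * t / log t) ^ (-α) := rpow_le_rpow_of_nonpos
        (by positivity) (div_log_le_of_le_mul_log (rpow_pos_of_pos hx q) ht hct h) (by linarith)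
    _ = (c / 4) ^ (-α) * t ^ (-α) * log t ^ α := by
      rw [div_rpow (by positivity) hL.le, mul_rpow (by positivity) ht0.le, rpow_neg hL.le,
        div_inv_eq_mul]

/-- If `γ ∈ (1,2)`, `C₀ > 0`, `T ≥ 0` and `E : [T,∞) → ℝ` is differentiable, nonincreasing
and positive with `E(T) ≤ exp(−γ/(2−γ))` and `E′(t) ≤ −C₀⁻¹E(t)^{2/γ}/|log E(t)|`, then there
are `C > 0` and `T₁ ≥ max(T,3)` with `E(t) ≤ C t^{−γ/(2−γ)}(log t)^{γ/(2−γ)}` for `t ≥ T₁`. -/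
theorem stmt13 :
    ∀ γ : ℝ, 1 < γ → γ < 2 → ∀ C₀ : ℝ, 0 < C₀ → ∀ T : ℝ, 0 ≤ T → ∀ E : ℝ → ℝ,
      (∀ t, T ≤ t → DifferentiableAt ℝ E t) →
      (∀ s t, T ≤ s → s ≤ t → E t ≤ E s) →
      (∀ t, T ≤ t → 0 < E t) →
      E T ≤ Real.exp (-(γ / (2 - γ))) →
      (∀ t, T ≤ t → deriv E t ≤ -C₀⁻¹ * (Real.rpow (E t) (2 / γ) / |Real.log (E t)|)) →
      ∃ C : ℝ, 0 < C ∧ ∃ T₁ : ℝ, max T 3 ≤ T₁ ∧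
        ∀ t, T₁ ≤ t →
          E t ≤ C * Real.rpow t (-(γ / (2 - γ))) * Real.rpow (Real.log t) (γ / (2 - γ)) := by
  intro γ hγ1 hγ2 C₀ hC₀ T _ E hdiff hmono hpos hET hderiv
  simp only [rpow_eq_pow] at hderiv ⊢
  set α := γ / (2 - γ)
  set p := 2 / γ
  have hp : 1 < p := by rw [lt_div_iff₀ (by linarith)]; linarith
  have hpα : (1 - p) * -α = 1 := by
    simp only [α, p]
    field_simp [(by linarith : 2 - γ ≠ 0)]
    ring
  have hlogE : ∀ t, T ≤ t → log (E t) ≤ -α := fun t ht =>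
    (log_le_iff_le_exp (hpos t ht)).2 ((hmono T t le_rfl ht).trans hET)
  have hα : 0 < α := div_pos (by linarith) (by linarith)
  have hlog : ∀ t, T ≤ t → log (E t) < 0 := fun t ht => (hlogE t ht).trans_lt (neg_lt_zero.2 hα)
  set c := (1 - p) ^ 2 / C₀
  have hc : 0 < c := div_pos (sq_pos_of_neg (by linarith)) hC₀
  refine ⟨(c / 4) ^ (-α), by positivity, max (max T 3) (max (2 * T) (c / 4)), le_max_left _ _,
    fun t ht => ?_⟩
  obtain ⟨⟨hTt, h3t⟩, h2Tt, hct⟩ : (T ≤ t ∧ 3 ≤ t) ∧ 2 * T ≤ t ∧ c / 4 ≤ t := by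
    simpa only [max_le_iff] using ht
  have hET' : 1 ≤ (1 - p) * log (E T) :=
    hpα.symm.le.trans <| mul_le_mul_of_nonpos_left (hlogE T le_rfl) (by linarith)
  refine le_mul_rpow_neg_mul_log_rpow (hpos t hTt) hpα hα.le hc
    (by linarith [exp_one_lt_d9]) (by linarith) ?_
  calc c * t / 2 ≤ c * (t - T) := by nlinarith
    _ ≤ E t ^ (1 - p) * log (E t ^ (1 - p)) :=
      mul_sub_le_rpow_mul_log_rpow hdiff hpos hlog hderiv hET' hTt
end

section
/- Let β ∈ (0,1), T ∈ ℝ, and let E : [T,∞) → ℝ be continuously differentiable with E(t) > 0, E′(t) ≤ 0, and E(t)^{β−1}·(−E′(t))^{1/2} ≥ 1 for all t ≥ T. Then for all T ≤ t ≤ t̃ one has ∫_t^{t̃} (−E′(s))^{1/2} ds ≤ β⁻¹ ( E(t)^β − E(t̃)^β ) ≤ β⁻¹ E(t)^β. -/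
/-!
Multiplying the hypothesis by `√(-E')` gives `√(-E') ≤ E^{β-1}(-E') = -(β⁻¹ E^β)'`,
so integrating over `[t, t̃]` yields the first bound; the second holds since `E(t̃)^β ≥ 0`.
-/

open Real MeasureTheory Set

lemma sqrt_le_mul_of_one_le_mul_sqrt {a y : ℝ} (h : 1 ≤ a * √y) : √y ≤ a * y := by
  have hy : 0 < y := Real.sqrt_pos.1 <| (Real.sqrt_nonneg y).lt_of_ne' fun h0 => by
    norm_num [h0] at h
  calc √y = √y * 1 := (mul_one _).symm
    _ ≤ √y * (a * √y) := mul_le_mul_of_nonneg_left h (Real.sqrt_nonneg y)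
    _ = a * (√y * √y) := by ring
    _ = a * y := by rw [Real.mul_self_sqrt hy.le]

theorem integral_rpow_sub_one_mul_deriv {β a b : ℝ} {E E' : ℝ → ℝ} (hβ : β ≠ 0)
    (hE : ∀ s ∈ uIcc a b, HasDerivAt E (E' s) s) (hpos : ∀ s ∈ uIcc a b, 0 < E s)
    (hint : IntervalIntegrable (fun s => E s ^ (β - 1) * E' s) volume a b) :
    ∫ s in a..b, E s ^ (β - 1) * E' s = β⁻¹ * (E b ^ β - E a ^ β) := by
  have hderiv : ∀ s ∈ uIcc a b, HasDerivAt (fun x => β⁻¹ * E x ^ β) (E s ^ (β - 1) * E' s) s := by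
    intro s hs
    refine (((hE s hs).rpow_const (Or.inl (hpos s hs).ne')).const_mul β⁻¹).congr_deriv ?_
    field_simp
  rw [intervalIntegral.integral_eq_sub_of_hasDerivAt hderiv hint]
  ring

theorem integral_sqrt_neg_deriv_le {β a b : ℝ} {E E' : ℝ → ℝ} (hβ : 0 < β) (hab : a ≤ b)
    (hE'c : ContinuousOn E' (Icc a b)) (hE : ∀ s ∈ Icc a b, HasDerivAt E (E' s) s)
    (hpos : ∀ s ∈ Icc a b, 0 < E s) (hkey : ∀ s ∈ Icc a b, 1 ≤ E s ^ (β - 1) * √(-E' s)) :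
    ∫ s in a..b, √(-E' s) ≤ β⁻¹ * (E a ^ β - E b ^ β) := by
  rw [← uIcc_of_le hab] at hE'c hE hpos
  have hEc : ContinuousOn E (uIcc a b) := fun s hs => (hE s hs).continuousAt.continuousWithinAt
  have hint : IntervalIntegrable (fun s => E s ^ (β - 1) * E' s) volume a b :=
    ((hEc.rpow_const fun s hs => Or.inl (hpos s hs).ne').mul hE'c).intervalIntegrable
  calc ∫ s in a..b, √(-E' s)
      ≤ ∫ s in a..b, -(E s ^ (β - 1) * E' s) :=
        intervalIntegral.integral_mono_on hab
          (continuous_sqrt.comp_continuousOn hE'c.neg).intervalIntegrable hint.neg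
          fun s hs => by simpa using sqrt_le_mul_of_one_le_mul_sqrt (hkey s hs)
    _ = β⁻¹ * (E a ^ β - E b ^ β) := by
        rw [intervalIntegral.integral_neg, integral_rpow_sub_one_mul_deriv hβ.ne' hE hpos hint]
        ring

/-- If `β ∈ (0,1)` and `E : [T,∞) → ℝ` is continuously differentiable with `E > 0`, `E′ ≤ 0`
and `E^{β−1}(−E′)^{1/2} ≥ 1`, then for all `T ≤ t ≤ t̃`:
`∫_t^{t̃} (−E′(s))^{1/2} ds ≤ β⁻¹(E(t)^β − E(t̃)^β) ≤ β⁻¹E(t)^β`. -/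
theorem stmt14 :
    ∀ β : ℝ, 0 < β → β < 1 → ∀ T : ℝ, ∀ E E' : ℝ → ℝ,
      ContinuousOn E' (Set.Ici T) →
      (∀ t, T ≤ t → HasDerivAt E (E' t) t) →
      (∀ t, T ≤ t → 0 < E t) →
      (∀ t, T ≤ t → E' t ≤ 0) →
      (∀ t, T ≤ t → 1 ≤ Real.rpow (E t) (β - 1) * Real.sqrt (-E' t)) →
      ∀ t tt, T ≤ t → t ≤ tt →
        (∫ s in t..tt, Real.sqrt (-E' s)) ≤
            β⁻¹ * (Real.rpow (E t) β - Real.rpow (E tt) β) ∧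
          β⁻¹ * (Real.rpow (E t) β - Real.rpow (E tt) β) ≤ β⁻¹ * Real.rpow (E t) β := by
  intro β hβ _ T E E' hE'c hE hpos _ hkey t tt hTt htt
  simp only [Real.rpow_eq_pow] at hkey ⊢
  have hT : ∀ s ∈ Icc t tt, T ≤ s := fun s hs => hTt.trans hs.1
  refine ⟨integral_sqrt_neg_deriv_le hβ htt (hE'c.mono fun s hs => hT s hs)
    (fun s hs => hE s (hT s hs)) (fun s hs => hpos s (hT s hs)) (fun s hs => hkey s (hT s hs)), ?_⟩
  exact mul_le_mul_of_nonneg_left (sub_le_self _ (rpow_nonneg (hpos tt (hTt.trans htt)).le β))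
    (inv_nonneg.2 hβ.le)
end
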